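/- Let (w_1, ..., w_m) ∈ NC_(m)(γ). The map sending (a_1, ..., a_m) to (a'_1, ..., a'_m) with a'_i = w_1 ... w_{i-1} a_i w_{i-1}^{-1} ... w_1^{-1} is a rank-preserving bijection from the set A = {(a_1,...,a_m) : (a_1,...,a_m) ≤ (a_1 w_1, ..., a_m w_m) in NC_(m)(γ)} onto NC_(m)(γ w_m^{-1} ... w_1^{-1}). -/

import Mathlib

open CoxeterSystem

/-- The reflection length `l_T` of an element of a Coxeter group: the least `k` such that
`w` is a product of `k` reflections. -/
noncomputable def reflLen {B W : Type*} [Group W] {M : CoxeterMatrix B}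
    (cs : CoxeterSystem M W) (w : W) : ℕ :=
  sInf {k | ∃ l : List W, l.length = k ∧ (∀ t ∈ l, cs.IsReflection t) ∧ l.prod = w}

/-- The absolute order on a Coxeter group: `u ≤ v` iff `l_T(u) + l_T(u⁻¹v) = l_T(v)`. -/
def absLe {B W : Type*} [Group W] {M : CoxeterMatrix B}
    (cs : CoxeterSystem M W) (u v : W) : Prop :=
  reflLen cs u + reflLen cs (u⁻¹ * v) = reflLen cs v

/-- `NC_(m)(δ)`: the set of `m`-tuples `(w_1, …, w_m)` with `w_1 ⋯ w_m ≤ δ` in absolute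
order and `l_T(w_1 ⋯ w_m) = Σ l_T(w_i)`. -/
def NCm {B W : Type*} [Group W] {M : CoxeterMatrix B}
    (cs : CoxeterSystem M W) (δ : W) {m : ℕ} (w : Fin m → W) : Prop :=
  absLe cs ((List.ofFn w).prod) δ ∧
    reflLen cs ((List.ofFn w).prod) = ∑ i, reflLen cs (w i)

/-
`l_T` is subadditive and invariant under conjugation. Writing `c_i = w_1 ⋯ w_{i-1}` and
`P = w_1 ⋯ w_m`, the factors `a'_i = c_i a_i c_i⁻¹` telescope to
`a'_1 ⋯ a'_m = (a_1 w_1) ⋯ (a_m w_m) P⁻¹`, so ranks are preserved and the membership condition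
on `a'` becomes a statement about `π = a'_1 ⋯ a'_m` and `πP = (a_1 w_1) ⋯ (a_m w_m)`. Since
`P ≤ γ`, one has `π ≤ γ P⁻¹` iff `πP ≤ γ` and `l_T(πP) = l_T(π) + l_T(P)`; the chain
`l_T(πP) ≤ Σ l_T(a_i w_i) ≤ Σ l_T(a_i) + Σ l_T(w_i)` is then tight, which forces `a_i ≤ a_i w_i`
for every `i`, and pointwise absolute-order bounds below a reduced tuple give `a ∈ NC_(m)(γ)`.
-/

section ReflectionLength

variable {B W : Type*} [Group W] {M : CoxeterMatrix B} (cs : CoxeterSystem M W)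

theorem reflLen_le_length {u : W} {l : List W} (hl : ∀ t ∈ l, cs.IsReflection t)
    (hprod : l.prod = u) : reflLen cs u ≤ l.length :=
  Nat.sInf_le ⟨l, rfl, hl, hprod⟩

theorem exists_reflections_length_eq_reflLen (u : W) : ∃ l : List W,
    l.length = reflLen cs u ∧ (∀ t ∈ l, cs.IsReflection t) ∧ l.prod = u := by
  obtain ⟨ω, rfl⟩ := cs.wordProd_surjective u
  have hsimple : ∀ t ∈ ω.map cs.simple, cs.IsReflection t := by
    simp only [List.mem_map]
    rintro _ ⟨i, -, rfl⟩
    exact cs.isReflection_simple i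
  have hne : {k | ∃ l : List W, l.length = k ∧ (∀ t ∈ l, cs.IsReflection t) ∧
      l.prod = cs.wordProd ω}.Nonempty := ⟨_, _, rfl, hsimple, rfl⟩
  exact Nat.sInf_mem hne

theorem reflLen_one : reflLen cs (1 : W) = 0 :=
  Nat.le_zero.mp (reflLen_le_length cs (l := []) (by simp) rfl)

theorem reflLen_mul_le (u v : W) : reflLen cs (u * v) ≤ reflLen cs u + reflLen cs v := by
  obtain ⟨lu, hlu, hru, rfl⟩ := exists_reflections_length_eq_reflLen cs u
  obtain ⟨lv, hlv, hrv, rfl⟩ := exists_reflections_length_eq_reflLen cs v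
  rw [← hlu, ← hlv, ← List.length_append, ← List.prod_append]
  exact reflLen_le_length cs (fun t ht => (List.mem_append.mp ht).elim (hru t) (hrv t)) rfl

theorem reflLen_conj_le (g u : W) : reflLen cs (g * u * g⁻¹) ≤ reflLen cs u := by
  obtain ⟨l, hl, hr, rfl⟩ := exists_reflections_length_eq_reflLen cs u
  rw [← hl, ← List.length_map (MulAut.conj g), ← MulAut.conj_apply, map_list_prod]
  refine reflLen_le_length cs (fun t ht => ?_) rfl
  obtain ⟨s, hs, rfl⟩ := List.mem_map.mp ht
  exact (hr s hs).conj g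

theorem reflLen_conj (g u : W) : reflLen cs (g * u * g⁻¹) = reflLen cs u := by
  refine le_antisymm (reflLen_conj_le cs g u) ?_
  simpa [mul_assoc] using reflLen_conj_le cs g⁻¹ (g * u * g⁻¹)

theorem reflLen_inv_conj (g u : W) : reflLen cs (g⁻¹ * u * g) = reflLen cs u := by
  simpa using reflLen_conj cs g⁻¹ u

theorem reflLen_prod_ofFn_le {m : ℕ} (f : Fin m → W) :
    reflLen cs (List.ofFn f).prod ≤ ∑ i, reflLen cs (f i) := by
  induction m with
  | zero => simp [reflLen_one]
  | succ n ih =>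
    rw [List.ofFn_succ, List.prod_cons, Fin.sum_univ_succ]
    exact (reflLen_mul_le cs _ _).trans (Nat.add_le_add_left (ih _) _)

end ReflectionLength

section AbsoluteOrder

variable {B W : Type*} [Group W] {M : CoxeterMatrix B} (cs : CoxeterSystem M W)

theorem absLe_mul_right_iff {u v : W} :
    absLe cs u (u * v) ↔ reflLen cs (u * v) = reflLen cs u + reflLen cs v := by
  rw [absLe, inv_mul_cancel_left, eq_comm]

variable {cs}

theorem absLe_trans {u v z : W} (huv : absLe cs u v) (hvz : absLe cs v z) : absLe cs u z := by
  unfold absLe at *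
  have h₁ := reflLen_mul_le cs (u⁻¹ * v) (v⁻¹ * z)
  have h₂ := reflLen_mul_le cs u (u⁻¹ * z)
  simp only [mul_assoc, mul_inv_cancel_left] at h₁ h₂
  omega

theorem absLe_mul_mul {x X y Y : W} (hx : absLe cs x y) (hX : absLe cs X Y)
    (hyY : reflLen cs (y * Y) = reflLen cs y + reflLen cs Y) :
    reflLen cs (x * X) = reflLen cs x + reflLen cs X ∧ absLe cs (x * X) (y * Y) := by
  unfold absLe at *
  have hquot : (x * X)⁻¹ * (y * Y) = X⁻¹ * (x⁻¹ * y) * X * (X⁻¹ * Y) := by group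
  have h₁ := reflLen_mul_le cs (x * X) ((x * X)⁻¹ * (y * Y))
  have h₂ := reflLen_mul_le cs (X⁻¹ * (x⁻¹ * y) * X) (X⁻¹ * Y)
  have h₃ := reflLen_mul_le cs x X
  rw [mul_inv_cancel_left] at h₁
  rw [reflLen_inv_conj, ← hquot] at h₂
  omega

theorem absLe_prod_ofFn {m : ℕ} {x y : Fin m → W} (hxy : ∀ i, absLe cs (x i) (y i))
    (hy : reflLen cs (List.ofFn y).prod = ∑ i, reflLen cs (y i)) :
    reflLen cs (List.ofFn x).prod = ∑ i, reflLen cs (x i) ∧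
      absLe cs (List.ofFn x).prod (List.ofFn y).prod := by
  induction m with
  | zero => simp [absLe, reflLen_one]
  | succ n ih =>
    simp only [List.ofFn_succ, List.prod_cons, Fin.sum_univ_succ] at hy ⊢
    have hmul := reflLen_mul_le cs (y 0) (List.ofFn fun i : Fin n => y i.succ).prod
    have htail := reflLen_prod_ofFn_le cs fun i : Fin n => y i.succ
    obtain ⟨htail_x, htail_le⟩ := ih (fun i => hxy i.succ) (by omega)
    obtain ⟨hhead_x, hle⟩ := absLe_mul_mul (hxy 0) htail_le (by omega)
    exact ⟨by omega, hle⟩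

theorem absLe_mul_inv_iff {π V γ : W} (hV : absLe cs V γ) :
    absLe cs π (γ * V⁻¹) ↔
      absLe cs (π * V) γ ∧ reflLen cs (π * V) = reflLen cs π + reflLen cs V := by
  unfold absLe at *
  have hγ : reflLen cs (γ * V⁻¹) = reflLen cs (V⁻¹ * γ) := by
    simpa [mul_assoc] using (reflLen_conj cs V⁻¹ (γ * V⁻¹)).symm
  have hquot : reflLen cs (π⁻¹ * (γ * V⁻¹)) = reflLen cs ((π * V)⁻¹ * γ) := by
    simpa [mul_assoc] using reflLen_conj cs V ((π * V)⁻¹ * γ)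
  have h₁ := reflLen_mul_le cs (π * V) ((π * V)⁻¹ * γ)
  have h₂ := reflLen_mul_le cs π V
  rw [mul_inv_cancel_left] at h₁
  rw [hγ, hquot]
  omega

end AbsoluteOrder

section PrefixConjugation

variable {W : Type*} [Group W]

/-- `prefixProd w i` is `w_1 ⋯ w_{i-1}` in the paper's one-based indexing. -/
def prefixProd {m : ℕ} (w : Fin m → W) (i : Fin m) : W :=
  ((List.ofFn w).take i).prod

@[simp]
theorem prefixProd_zero {n : ℕ} (w : Fin (n + 1) → W) : prefixProd w 0 = 1 := by
  simp [prefixProd]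

@[simp]
theorem prefixProd_succ {n : ℕ} (w : Fin (n + 1) → W) (i : Fin n) :
    prefixProd w i.succ = w 0 * prefixProd (fun j => w j.succ) i := by
  simp [prefixProd, List.ofFn_succ, List.take_succ_cons]

theorem prod_ofFn_prefixProd_conj_mul {m : ℕ} (a w : Fin m → W) :
    (List.ofFn fun i => prefixProd w i * a i * (prefixProd w i)⁻¹).prod * (List.ofFn w).prod =
      (List.ofFn fun i => a i * w i).prod := by
  induction m with
  | zero => simp
  | succ n ih =>
    have hconj : ∀ i : Fin n, prefixProd w i.succ * a i.succ * (prefixProd w i.succ)⁻¹ =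
        MulAut.conj (w 0) (prefixProd (fun j => w j.succ) i * a i.succ *
          (prefixProd (fun j => w j.succ) i)⁻¹) := by
      intro i
      simp only [prefixProd_succ, MulAut.conj_apply]
      group
    rw [List.ofFn_succ, List.ofFn_succ, List.ofFn_succ, List.prod_cons, List.prod_cons,
      List.prod_cons, prefixProd_zero]
    simp only [hconj]
    rw [List.ofFn_comp' _ (MulAut.conj (w 0)), ← map_list_prod, MulAut.conj_apply,
      ← ih (fun i => a i.succ) (fun j => w j.succ)]
    group

end PrefixConjugation

section NoncrossingTuples

variable {B W : Type*} [Group W] {M : CoxeterMatrix B} {cs : CoxeterSystem M W}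

theorem NCm_prefixProd_conj_iff {γ : W} {m : ℕ} {w : Fin m → W} (hw : NCm cs γ w)
    (a : Fin m → W) :
    NCm cs (γ * (List.ofFn w).prod⁻¹) (fun i => prefixProd w i * a i * (prefixProd w i)⁻¹) ↔
      NCm cs γ a ∧ NCm cs γ (fun i => a i * w i) ∧ ∀ i, absLe cs (a i) (a i * w i) := by
  obtain ⟨hWγ, hWsum⟩ := hw
  simp only [NCm, absLe_mul_right_iff]
  set π := (List.ofFn fun i => prefixProd w i * a i * (prefixProd w i)⁻¹).prod
  have hπW : π * (List.ofFn w).prod = (List.ofFn fun i => a i * w i).prod :=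
    prod_ofFn_prefixProd_conj_mul a w
  have hrank : ∑ i, reflLen cs (prefixProd w i * a i * (prefixProd w i)⁻¹) =
      ∑ i, reflLen cs (a i) :=
    Finset.sum_congr rfl fun i _ => reflLen_conj cs _ _
  have hπ_le : reflLen cs π ≤ ∑ i, reflLen cs (a i) :=
    hrank ▸ reflLen_prod_ofFn_le cs _
  have hπW_le := reflLen_mul_le cs π (List.ofFn w).prod
  have hB_le : reflLen cs (List.ofFn fun i => a i * w i).prod ≤ ∑ i, reflLen cs (a i * w i) :=
    reflLen_prod_ofFn_le cs _
  have hterm : ∀ i, reflLen cs (a i * w i) ≤ reflLen cs (a i) + reflLen cs (w i) :=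
    fun i => reflLen_mul_le cs _ _
  have hsum_le : ∑ i, reflLen cs (a i * w i) ≤ ∑ i, reflLen cs (a i) + ∑ i, reflLen cs (w i) :=
    (Finset.sum_le_sum fun i _ => hterm i).trans_eq Finset.sum_add_distrib
  rw [hπW] at hπW_le
  rw [hrank, absLe_mul_inv_iff hWγ, hπW]
  constructor
  · rintro ⟨⟨hBγ, hBπW⟩, hπ⟩
    have hsplit : ∀ i, reflLen cs (a i * w i) = reflLen cs (a i) + reflLen cs (w i) := by
      have hsum : ∑ i, reflLen cs (a i * w i) = ∑ i, (reflLen cs (a i) + reflLen cs (w i)) := by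
        rw [Finset.sum_add_distrib]
        omega
      exact fun i => (Finset.sum_eq_sum_iff_of_le fun i _ => hterm i).mp hsum i (Finset.mem_univ i)
    have hB : reflLen cs (List.ofFn fun i => a i * w i).prod = ∑ i, reflLen cs (a i * w i) := by
      omega
    obtain ⟨hA, hAB⟩ := absLe_prod_ofFn (fun i => (absLe_mul_right_iff cs).mpr (hsplit i)) hB
    exact ⟨⟨absLe_trans hAB hBγ, hA⟩, ⟨hBγ, hB⟩, hsplit⟩
  · rintro ⟨-, ⟨hBγ, hB⟩, hsplit⟩
    have hsum : ∑ i, reflLen cs (a i * w i) = ∑ i, reflLen cs (a i) + ∑ i, reflLen cs (w i) := by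
      rw [← Finset.sum_add_distrib]
      exact Finset.sum_congr rfl fun i _ => hsplit i
    exact ⟨⟨hBγ, by omega⟩, by omega⟩

end NoncrossingTuples

theorem NCm_rank_preserving_bijection_general {B W : Type*} [Group W] {M : CoxeterMatrix B}
    (cs : CoxeterSystem M W) (γ : W) {m : ℕ} (w : Fin m → W) (hw : NCm cs γ w) :
    ∃ e : {a : Fin m → W // NCm cs γ a ∧ NCm cs γ (fun i => a i * w i) ∧
            ∀ i, absLe cs (a i) (a i * w i)} ≃
          {a' : Fin m → W // NCm cs (γ * ((List.ofFn w).prod)⁻¹) a'},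
      (∀ x (i : Fin m), (e x).1 i =
          ((List.ofFn w).take i.val).prod * x.1 i * (((List.ofFn w).take i.val).prod)⁻¹) ∧
      ∀ x, ∑ i, reflLen cs ((e x).1 i) = ∑ i, reflLen cs (x.1 i) :=
  ⟨(Equiv.piCongrRight fun i => (MulAut.conj (prefixProd w i)).toEquiv).subtypeEquiv
      fun a => (NCm_prefixProd_conj_iff hw a).symm,
    fun _ _ => rfl, fun _ => Finset.sum_congr rfl fun _ _ => reflLen_conj cs _ _⟩

/-- For `(w_1, …, w_m) ∈ NC_(m)(γ)`, the map sending `(a_1, …, a_m)` to `(a'_1, …, a'_m)`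
with `a'_i = w_1 ⋯ w_{i-1} a_i w_{i-1}⁻¹ ⋯ w_1⁻¹` is a rank-preserving bijection from
`A = {(a_1,…,a_m) : (a_1,…,a_m) ≤ (a_1w_1, …, a_mw_m) in NC_(m)(γ)}` onto
`NC_(m)(γ w_m⁻¹ ⋯ w_1⁻¹)`. -/
theorem NCm_rank_preserving_bijection {B W : Type*} [Group W] [Finite W] {M : CoxeterMatrix B}
    (cs : CoxeterSystem M W) (γ : W) {m : ℕ} (w : Fin m → W) (hw : NCm cs γ w) :
    ∃ e : {a : Fin m → W // NCm cs γ a ∧ NCm cs γ (fun i => a i * w i) ∧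
            ∀ i, absLe cs (a i) (a i * w i)} ≃
          {a' : Fin m → W // NCm cs (γ * ((List.ofFn w).prod)⁻¹) a'},
      (∀ x (i : Fin m), (e x).1 i =
          ((List.ofFn w).take i.val).prod * x.1 i * (((List.ofFn w).take i.val).prod)⁻¹) ∧
      ∀ x, ∑ i, reflLen cs ((e x).1 i) = ∑ i, reflLen cs (x.1 i) :=
  NCm_rank_preserving_bijection_general cs γ w hw
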